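/- If $d \in \mathrm{Sym}_n$ is such that $\mathrm{T}_d$ is a semistandard $\lambda$-tableau of type $(\alpha|\beta)$, then $d \in \mathscr{R} \cap \mathscr{C}$, where $\mathscr{R} = \{d : d^{-1} R_{\t_0} d \cap \mathrm{Sym}_{\alpha|\beta} \subseteq \mathrm{Sym}_{\alpha}\}$ and $\mathscr{C} = \{d : d^{-1} C_{\t_0} d \cap \mathrm{Sym}_{\alpha|\beta} \subseteq \mathrm{Sym}_{\beta}^{+|\alpha|}\}$. -/

import Mathlib

/-!
If `d⁻¹ σ d` lies in the Young subgroup `Sym_{α|β}` and moves `i`, then `σ` moves the entry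
`d i` of `t0` to an entry whose cell in `T_d` carries the same colour as `i` under the canonical
colouring. For `σ` in the row stabilizer the two cells are distinct cells of one row, so
semistandardness forces that colour to be some `c_k`, i.e. `i < |α|`; dually, for `σ` in the
column stabilizer it forces `i ≥ |α|`.
-/

namespace SignedYoung
open Equiv Finset
open scoped Classical

abbrev Sym (n : ℕ) := Equiv.Perm (Fin n)

/-- Index of the block of the composition `γ` containing position `i` (0-based). -/
def blockOf (γ : List ℕ) (i : ℕ) : ℕ :=
  (List.range γ.length).countP (fun j => decide ((γ.take (j + 1)).sum ≤ i))

/-- The Young subgroup of `Sym n` associated to the composition `γ`. -/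
def youngSubgroup (n : ℕ) (γ : List ℕ) : Subgroup (Sym n) where
  carrier := {σ | ∀ i : Fin n, blockOf γ (σ i) = blockOf γ i}
  one_mem' := by intro i; simp
  mul_mem' := by
    intro a b ha hb i
    simp only [Equiv.Perm.mul_apply]
    rw [ha, hb]
  inv_mem' := by
    intro a ha i
    have h := ha (a⁻¹ i)
    rw [show a (a⁻¹ i) = i from a.apply_symm_apply i] at h
    exact h.symm

/-- The subgroup `Sym_α` of the Young subgroup `Sym_{α|β}`: block-preserving permutations
fixing all points `≥ |α|`. -/
def symA (n : ℕ) (α β : List ℕ) : Set (Sym n) :=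
  {σ | σ ∈ youngSubgroup n (α ++ β) ∧ ∀ i : Fin n, α.sum ≤ (i : ℕ) → σ i = i}

/-- The subgroup `Sym_β^{+|α|}`: block-preserving permutations fixing all points `< |α|`. -/
def symB (n : ℕ) (α β : List ℕ) : Set (Sym n) :=
  {σ | σ ∈ youngSubgroup n (α ++ β) ∧ ∀ i : Fin n, (i : ℕ) < α.sum → σ i = i}

/-- Cells of the Young diagram of the composition `lam`. -/
abbrev Cell (lam : List ℕ) := (i : Fin lam.length) × Fin (lam.get i)

/-- A `lam`-tableau: a bijective labelling of the cells by `1, …, n` (here `Fin n`). -/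
abbrev Tab (n : ℕ) (lam : List ℕ) := Cell lam ≃ Fin n

/-- The row stabilizer of a tableau. -/
def rowStab {n : ℕ} {lam : List ℕ} (t : Tab n lam) : Set (Sym n) :=
  {σ | ∀ a : Fin n, (t.symm (σ a)).1 = (t.symm a).1}

/-- The column stabilizer of a tableau. -/
def colStab {n : ℕ} {lam : List ℕ} (t : Tab n lam) : Set (Sym n) :=
  {σ | ∀ a : Fin n, ((t.symm (σ a)).2 : ℕ) = ((t.symm a).2 : ℕ)}

/-- Colours `c_1 < c_2 < ⋯ < d_1 < d_2 < ⋯` (0-based). -/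
abbrev Colour := Lex (ℕ ⊕ ℕ)

def cCol (k : ℕ) : Colour := toLex (Sum.inl k)

def dCol (k : ℕ) : Colour := toLex (Sum.inr k)

/-- `T` is a `lam`-tableau of type `(α|β)`: exactly `α_k` cells of colour `c_k` and
`β_k` of colour `d_k`. -/
def HasType {lam : List ℕ} (α β : List ℕ) (T : Cell lam → Colour) : Prop :=
  (∀ k : ℕ, (Finset.univ.filter fun c => T c = cCol k).card = α.getD k 0) ∧
  (∀ k : ℕ, (Finset.univ.filter fun c => T c = dCol k).card = β.getD k 0)

/-- The colour of the number `i` under the canonical colouring by `(α|β)`. -/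
def colourOfIdx (α β : List ℕ) (i : ℕ) : Colour :=
  if blockOf (α ++ β) i < α.length then cCol (blockOf (α ++ β) i)
  else dCol (blockOf (α ++ β) i - α.length)

/-- The canonical `lam`-tableau of type `(α|β)` associated to the tableau `t0`. -/
def canonT {n : ℕ} {lam : List ℕ} (t0 : Tab n lam) (α β : List ℕ) : Cell lam → Colour :=
  fun c => colourOfIdx α β (t0 c)

/-- The action `σ · T = T ∘ t0⁻¹ ∘ σ⁻¹ ∘ t0` of `Sym n` on tableaux of type `(α|β)`,
through the fixed tableau `t0`. -/
def actT {n : ℕ} {lam : List ℕ} (t0 : Tab n lam) (σ : Sym n) (T : Cell lam → Colour) :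
    Cell lam → Colour :=
  fun c => T (t0.symm (σ⁻¹ (t0 c)))

/-- `T_d = d · T_0`. -/
def TOf {n : ℕ} {lam : List ℕ} (t0 : Tab n lam) (α β : List ℕ) (d : Sym n) :
    Cell lam → Colour :=
  actT t0 d (canonT t0 α β)

def RowSemistd {lam : List ℕ} (T : Cell lam → Colour) : Prop :=
  ∀ c c' : Cell lam, c.1 = c'.1 → (c.2 : ℕ) < (c'.2 : ℕ) → T c ≤ T c'

def ColSemistd {lam : List ℕ} (T : Cell lam → Colour) : Prop :=
  ∀ c c' : Cell lam, (c.2 : ℕ) = (c'.2 : ℕ) → c.1 < c'.1 → T c ≤ T c'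

/-- Repeats in a row occur only for colours `c_k`. -/
def RowRepeatC {lam : List ℕ} (T : Cell lam → Colour) : Prop :=
  ∀ c c' : Cell lam, c.1 = c'.1 → (c.2 : ℕ) ≠ (c'.2 : ℕ) → T c = T c' → ∃ k, T c = cCol k

/-- Repeats in a column occur only for colours `d_k`. -/
def ColRepeatD {lam : List ℕ} (T : Cell lam → Colour) : Prop :=
  ∀ c c' : Cell lam, (c.2 : ℕ) = (c'.2 : ℕ) → c.1 ≠ c'.1 → T c = T c' → ∃ k, T c = dCol k

def IsSemistd {lam : List ℕ} (T : Cell lam → Colour) : Prop :=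
  RowSemistd T ∧ ColSemistd T ∧ RowRepeatC T ∧ ColRepeatD T

/-- A standard tableau: strictly increasing along rows and down columns. -/
def IsStd {n : ℕ} {lam : List ℕ} (t : Tab n lam) : Prop :=
  (∀ c c' : Cell lam, c.1 = c'.1 → (c.2 : ℕ) < (c'.2 : ℕ) → t c < t c') ∧
  (∀ c c' : Cell lam, (c.2 : ℕ) = (c'.2 : ℕ) → c.1 < c'.1 → t c < t c')

def IsPartition (n : ℕ) (lam : List ℕ) : Prop :=
  lam.Pairwise (· ≥ ·) ∧ (∀ x ∈ lam, 0 < x) ∧ lam.sum = n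

def IsBicomp (n : ℕ) (α β : List ℕ) : Prop :=
  (∀ x ∈ α, 0 < x) ∧ (∀ x ∈ β, 0 < x) ∧ α.sum + β.sum = n

/-- `𝒮 = {d : d⁻¹ R_{t0} d ∩ Sym_{α|β} ⊆ Sym_α}`. -/
def RSet {n : ℕ} {lam : List ℕ} (t0 : Tab n lam) (α β : List ℕ) : Set (Sym n) :=
  {d | ∀ σ ∈ rowStab t0, d⁻¹ * σ * d ∈ youngSubgroup n (α ++ β) →
    d⁻¹ * σ * d ∈ symA n α β}

/-- `𝒞 = {d : d⁻¹ C_{t0} d ∩ Sym_{α|β} ⊆ Sym_β^{+|α|}}`. -/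
def CSet {n : ℕ} {lam : List ℕ} (t0 : Tab n lam) (α β : List ℕ) : Set (Sym n) :=
  {d | ∀ σ ∈ colStab t0, d⁻¹ * σ * d ∈ youngSubgroup n (α ++ β) →
    d⁻¹ * σ * d ∈ symB n α β}

/-- The double coset `R_{t0} x Sym_{α|β}`. -/
def dCoset {n : ℕ} {lam : List ℕ} (t0 : Tab n lam) (α β : List ℕ) (x : Sym n) :
    Set (Sym n) :=
  {ω | ∃ τ ∈ rowStab t0, ∃ ξ ∈ youngSubgroup n (α ++ β), ω = τ * x * ξ}

/-- The double coset `C_{t0} x Sym_{α|β}`. -/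
def cCoset {n : ℕ} {lam : List ℕ} (t0 : Tab n lam) (α β : List ℕ) (x : Sym n) :
    Set (Sym n) :=
  {ω | ∃ σ ∈ colStab t0, ∃ ξ ∈ youngSubgroup n (α ++ β), ω = σ * x * ξ}

/-- `ε` is the sign function `ε_𝔡` on the double coset `R_{t0} 𝔡 Sym_{α|β}`:
`ε(τ 𝔡 ξ_α ξ_β^{+|α|}) = sgn ξ_β`. -/
def IsEps {n : ℕ} {lam : List ℕ} (t0 : Tab n lam) (α β : List ℕ) (𝔡 : Sym n)
    (ε : Sym n → ℤ) : Prop :=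
  ∀ τ ∈ rowStab t0, ∀ ξa ∈ symA n α β, ∀ ξb ∈ symB n α β,
    ε (τ * 𝔡 * (ξa * ξb)) = (Equiv.Perm.sign ξb : ℤ)

/-- The coefficient `𝔞_{d,𝔡} = ∑_{σ ∈ C_{t0}, σd ∈ R_{t0} 𝔡 Sym_{α|β}} sgn(σ) ε_𝔡(σ d)`. -/
noncomputable def coeffA {n : ℕ} {lam : List ℕ} (t0 : Tab n lam) (α β : List ℕ)
    (ε : Sym n → ℤ) (d 𝔡 : Sym n) : ℤ :=
  ∑ σ : Sym n, if σ ∈ colStab t0 ∧ σ * d ∈ dCoset t0 α β 𝔡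
    then (Equiv.Perm.sign σ : ℤ) * ε (σ * d) else 0

/-- The multiset of colours in column `j` of `T`. -/
def colMul {lam : List ℕ} (T : Cell lam → Colour) (j : ℕ) : Multiset Colour :=
  (Finset.univ.filter fun c : Cell lam => (c.2 : ℕ) = j).val.map T

noncomputable def sortedCol (m : Multiset Colour) : List Colour := m.sort (· ≤ ·)

/-- Comparison of column multisets: the sorted lists agree up to position `k`, where
the first is larger. -/
def msGT (m m' : Multiset Colour) : Prop :=
  ∃ k, (∀ s, s < k → (sortedCol m).getD s (cCol 0) = (sortedCol m').getD s (cCol 0)) ∧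
    (sortedCol m').getD k (cCol 0) < (sortedCol m).getD k (cCol 0)

/-- The strict column-dominance order `T ⊳ T'`. -/
def TabGT {lam : List ℕ} (T T' : Cell lam → Colour) : Prop :=
  ∃ t, (∀ j, j < t → colMul T j = colMul T' j) ∧ msGT (colMul T t) (colMul T' t)

/-- The column-dominance pre-order `T ⊵ T'`. -/
def TabGE {lam : List ℕ} (T T' : Cell lam → Colour) : Prop :=
  (∀ j, colMul T j = colMul T' j) ∨ TabGT T T'

theorem Nat.count_lt_iff_exists_not_of_antitone {p : ℕ → Prop} [DecidablePred p]
    (hp : Antitone p) {L N : ℕ} (hLN : L ≤ N) :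
    Nat.count p N < L ↔ ∃ j < L, ¬ p j := by
  constructor
  · intro hlt
    by_contra! hall
    have hL : Nat.count p L = L := Nat.count_iff_forall.mpr hall
    have := Nat.count_monotone p hLN
    omega
  · rintro ⟨j, hjL, hj⟩
    have htail : Nat.count (fun k => p (j + k)) (N - j) = 0 :=
      Nat.count_iff_forall_not.mpr fun k _ hk => hj (hp (Nat.le_add_right j k) hk)
    have hsplit := Nat.count_add p j (N - j)
    rw [Nat.add_sub_cancel' (by omega), htail] at hsplit
    have := Nat.count_le (p := p) (n := j)
    omega

theorem List.sum_take_mono (l : List ℕ) {a b : ℕ} (h : a ≤ b) :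
    (l.take a).sum ≤ (l.take b).sum :=
  (List.take_prefix_take_left h).sublist.sum_le_sum fun _ _ => Nat.zero_le _

theorem blockOf_append_lt_length_iff (α β : List ℕ) (i : ℕ) :
    blockOf (α ++ β) i < α.length ↔ i < α.sum := by
  change Nat.count (fun j => ((α ++ β).take (j + 1)).sum ≤ i) (α ++ β).length < α.length ↔ _
  rw [Nat.count_lt_iff_exists_not_of_antitone
    (fun _ _ hab hb => (List.sum_take_mono _ (by omega)).trans hb) (by simp)]
  constructor
  · rintro ⟨j, hj, hlt⟩
    rw [List.take_append_of_le_length hj] at hlt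
    calc i < (α.take (j + 1)).sum := not_le.mp hlt
      _ ≤ (α.take α.length).sum := List.sum_take_mono α (by omega)
      _ = α.sum := by rw [List.take_length]
  · intro hi
    have hpos : 0 < α.length := List.length_pos_iff.mpr (by rintro rfl; simp at hi)
    refine ⟨α.length - 1, by omega, fun hle => ?_⟩
    rw [List.take_left' (by omega)] at hle
    omega

theorem colourOfIdx_of_lt {α β : List ℕ} {i : ℕ} (hi : i < α.sum) :
    colourOfIdx α β i = cCol (blockOf (α ++ β) i) :=
  if_pos ((blockOf_append_lt_length_iff α β i).mpr hi)

theorem colourOfIdx_of_le {α β : List ℕ} {i : ℕ} (hi : α.sum ≤ i) :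
    colourOfIdx α β i = dCol (blockOf (α ++ β) i - α.length) :=
  if_neg (by rw [blockOf_append_lt_length_iff]; omega)

theorem cCol_ne_dCol (k k' : ℕ) : cCol k ≠ dCol k' := by
  simp [cCol, dCol]

variable {n : ℕ} {lam : List ℕ}

theorem Cell.ext_val {c c' : Cell lam} (h1 : c.1 = c'.1) (h2 : (c.2 : ℕ) = c'.2) : c = c' := by
  obtain ⟨a, x⟩ := c
  obtain ⟨b, y⟩ := c'
  dsimp only at h1 h2
  subst h1
  rw [Fin.ext h2]

theorem col_ne_of_mem_rowStab {t : Tab n lam} {σ : Sym n} (hσ : σ ∈ rowStab t) {a : Fin n}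
    (ha : σ a ≠ a) : (t.symm (σ a)).1 = (t.symm a).1 ∧ ((t.symm (σ a)).2 : ℕ) ≠ (t.symm a).2 :=
  ⟨hσ a, fun h => ha (t.symm.injective (Cell.ext_val (hσ a) h))⟩

theorem row_ne_of_mem_colStab {t : Tab n lam} {σ : Sym n} (hσ : σ ∈ colStab t) {a : Fin n}
    (ha : σ a ≠ a) : ((t.symm (σ a)).2 : ℕ) = (t.symm a).2 ∧ (t.symm (σ a)).1 ≠ (t.symm a).1 :=
  ⟨hσ a, fun h => ha (t.symm.injective (Cell.ext_val h (hσ a)))⟩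

theorem TOf_symm_apply (t0 : Tab n lam) (α β : List ℕ) (d : Sym n) (i : Fin n) :
    TOf t0 α β d (t0.symm (d i)) = colourOfIdx α β i := by
  simp [TOf, actT, canonT]

theorem TOf_symm_apply_conj {t0 : Tab n lam} {α β : List ℕ} {d σ : Sym n}
    (hσ : d⁻¹ * σ * d ∈ youngSubgroup n (α ++ β)) (i : Fin n) :
    TOf t0 α β d (t0.symm (σ (d i))) = colourOfIdx α β i := by
  have hdi : σ (d i) = d ((d⁻¹ * σ * d) i) := by simp [Perm.mul_apply]
  rw [hdi, TOf_symm_apply, colourOfIdx, colourOfIdx, hσ i]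

theorem apply_ne_of_conj_apply_ne {d σ : Sym n} {i : Fin n} (h : (d⁻¹ * σ * d) i ≠ i) :
    σ (d i) ≠ d i :=
  fun hfix => h (by simp [Perm.mul_apply, hfix])

theorem mem_RSet_of_rowRepeatC {t0 : Tab n lam} {α β : List ℕ} {d : Sym n}
    (hrow : RowRepeatC (TOf t0 α β d)) : d ∈ RSet t0 α β := by
  refine fun σ hσ hy => ⟨hy, fun i hi => ?_⟩
  by_contra hne
  obtain ⟨hsame, hcol⟩ := col_ne_of_mem_rowStab hσ (apply_ne_of_conj_apply_ne hne)
  obtain ⟨k, hk⟩ := hrow _ _ hsame hcol (by rw [TOf_symm_apply_conj hy, TOf_symm_apply])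
  rw [TOf_symm_apply_conj hy, colourOfIdx_of_le hi] at hk
  exact cCol_ne_dCol _ _ hk.symm

theorem mem_CSet_of_colRepeatD {t0 : Tab n lam} {α β : List ℕ} {d : Sym n}
    (hcol : ColRepeatD (TOf t0 α β d)) : d ∈ CSet t0 α β := by
  refine fun σ hσ hy => ⟨hy, fun i hi => ?_⟩
  by_contra hne
  obtain ⟨hsame, hrow⟩ := row_ne_of_mem_colStab hσ (apply_ne_of_conj_apply_ne hne)
  obtain ⟨k, hk⟩ := hcol _ _ hsame hrow (by rw [TOf_symm_apply_conj hy, TOf_symm_apply])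
  rw [TOf_symm_apply_conj hy, colourOfIdx_of_lt hi] at hk
  exact cCol_ne_dCol _ _ hk

theorem semistandard_mem_RSet_inter_CSet_general (n : ℕ) (lam : List ℕ)
    (α β : List ℕ) (t0 : Tab n lam) (d : Sym n)
    (hss : IsSemistd (TOf t0 α β d)) :
    d ∈ RSet t0 α β ∩ CSet t0 α β :=
  ⟨mem_RSet_of_rowRepeatC hss.2.2.1, mem_CSet_of_colRepeatD hss.2.2.2⟩

/-- **Semistandard implies `ℛ ∩ 𝒞`.** If `T_d` is a semistandard `λ`-tableau of type
`(α|β)`, then `d ∈ ℛ ∩ 𝒞`. -/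
theorem semistandard_mem_RSet_inter_CSet (n : ℕ) (lam : List ℕ) (hl : IsPartition n lam)
    (α β : List ℕ) (hab : IsBicomp n α β) (t0 : Tab n lam) (d : Sym n)
    (hss : IsSemistd (TOf t0 α β d)) :
    d ∈ RSet t0 α β ∩ CSet t0 α β :=
  semistandard_mem_RSet_inter_CSet_general n lam α β t0 d hss

end SignedYoung
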